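/- arXiv:2401.03716 — 2 statements merged into one kernel-verified Lean document; each statement's English description precedes it below -/
import Mathlib

section
/- For every w ∈ ℂ, every τ in the upper half-plane, every positive integer d and every integer k, one has ∑_{ℓ=0}^{d−1} e^{−2iπkℓ/d} θ(w + ℓ/d, τ) = d · e^{iπ k² τ} · e^{2iπ k w} · θ(dw + dkτ, d²τ). -/
open Finset

/-- The Jacobi theta function `θ(z, τ) = ∑_{m ∈ ℤ} exp(iπm²τ) exp(2iπmz)`. -/
noncomputable def theta (z τ : ℂ) : ℂ :=
  ∑' m : ℤ, Complex.exp ((Real.pi : ℂ) * Complex.I * (m : ℂ) ^ 2 * τ) *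
    Complex.exp (2 * (Real.pi : ℂ) * Complex.I * (m : ℂ) * z)

/-!
Expanding θ, the ℓ-sum can be taken inside the m-series, and for each m it is the sum of the
first d powers of the d-th root of unity e^{2iπ(m−k)/d}: it equals d when d ∣ m − k and
vanishes otherwise. Only the terms m = k + dn survive, and completing the square,
iπ(k+dn)²τ + 2iπ(k+dn)w = iπk²τ + 2iπkw + iπn²(d²τ) + 2iπn(dw + dkτ),
identifies what remains with the right-hand side.
-/

open Complex Real

lemma theta_eq_jacobiTheta₂ (z τ : ℂ) : theta z τ = jacobiTheta₂ z τ := by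
  refine tsum_congr fun m => ?_
  rw [jacobiTheta₂_term, ← Complex.exp_add]
  ring_nf

lemma geom_sum_eq_ite_of_pow_eq_one {K : Type*} [Field K] [DecidableEq K] {x : K} {d : ℕ}
    (hx : x ^ d = 1) :
    ∑ l ∈ range d, x ^ l = if x = 1 then (d : K) else 0 := by
  split_ifs with h
  · simp [h]
  · rw [geom_sum_eq h, hx, sub_self, zero_div]

lemma sum_range_exp_two_pi_I_mul_div {d : ℕ} (hd : d ≠ 0) (n : ℤ) :
    ∑ l ∈ range d, cexp (2 * π * I * n * l / d) =
      if (d : ℤ) ∣ n then (d : ℂ) else 0 := by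
  have hζ := isPrimitiveRoot_exp d hd
  have hpow (l : ℕ) : cexp (2 * π * I * n * l / d) = (cexp (2 * π * I / d) ^ n) ^ l := by
    rw [← Complex.exp_int_mul, ← Complex.exp_nat_mul]
    ring_nf
  have hroot : (cexp (2 * π * I / d) ^ n) ^ d = 1 := by
    rw [← zpow_natCast, ← zpow_mul, mul_comm n, zpow_mul, zpow_natCast, hζ.pow_eq_one,
      one_zpow]
  simp_rw [hpow, geom_sum_eq_ite_of_pow_eq_one hroot, hζ.zpow_eq_one_iff_dvd]

lemma jacobiTheta₂_term_add_left (n : ℤ) (z t τ : ℂ) :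
    jacobiTheta₂_term n (z + t) τ = cexp (2 * π * I * n * t) * jacobiTheta₂_term n z τ := by
  rw [jacobiTheta₂_term, jacobiTheta₂_term, ← Complex.exp_add]
  ring_nf

lemma sum_range_exp_mul_jacobiTheta₂_term_add_div {d : ℕ} (hd : d ≠ 0) (k m : ℤ)
    (z τ : ℂ) :
    ∑ l ∈ range d, cexp (-2 * π * I * k * l / d) * jacobiTheta₂_term m (z + l / d) τ =
      if (d : ℤ) ∣ m - k then d * jacobiTheta₂_term m z τ else 0 := by
  have hterm (l : ℕ) : cexp (-2 * π * I * k * l / d) * jacobiTheta₂_term m (z + l / d) τ =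
      cexp (2 * π * I * (m - k : ℤ) * l / d) * jacobiTheta₂_term m z τ := by
    rw [jacobiTheta₂_term_add_left, ← mul_assoc, ← Complex.exp_add]
    push_cast
    ring_nf
  simp_rw [hterm, ← sum_mul, sum_range_exp_two_pi_I_mul_div hd, ite_mul, zero_mul]

lemma jacobiTheta₂_term_add_mul (k c n : ℤ) (z τ : ℂ) :
    jacobiTheta₂_term (k + c * n) z τ =
      cexp (π * I * k ^ 2 * τ) * cexp (2 * π * I * k * z) *
        jacobiTheta₂_term n (c * z + c * k * τ) (c ^ 2 * τ) := by
  rw [jacobiTheta₂_term, jacobiTheta₂_term, ← Complex.exp_add, ← Complex.exp_add]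
  push_cast
  ring_nf

lemma tsum_ite_dvd_sub {M : Type*} [AddCommMonoid M] [TopologicalSpace M] {c : ℤ} (hc : c ≠ 0)
    (k : ℤ) (f : ℤ → M) :
    ∑' m, (if c ∣ m - k then f m else 0) = ∑' n, f (k + c * n) := by
  have hinj : Function.Injective (fun n : ℤ => k + c * n) := fun a b h =>
    mul_left_cancel₀ hc (add_left_cancel h)
  rw [← hinj.tsum_eq]
  · refine tsum_congr fun n => ?_
    simp
  · intro m hm
    obtain ⟨n, hn⟩ : c ∣ m - k := not_not.mp fun h => hm (if_neg h)
    exact ⟨n, show k + c * n = m by omega⟩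

/-- Lemma 2.5: the finite Fourier transform of the theta function:
`∑_{ℓ=0}^{d−1} e^{−2iπkℓ/d} θ(w + ℓ/d, τ) = d e^{iπk²τ} e^{2iπkw} θ(dw + dkτ, d²τ)`. -/
theorem fourier_sum_theta (w τ : ℂ) (hτ : 0 < τ.im) (d : ℕ) (hd : 0 < d) (k : ℤ) :
    ∑ l ∈ Finset.range d,
      Complex.exp (-2 * (Real.pi : ℂ) * Complex.I * (k : ℂ) * (l : ℂ) / d) *
        theta (w + (l : ℂ) / d) τ =
      (d : ℂ) * Complex.exp ((Real.pi : ℂ) * Complex.I * (k : ℂ) ^ 2 * τ) *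
        Complex.exp (2 * (Real.pi : ℂ) * Complex.I * (k : ℂ) * w) *
        theta ((d : ℂ) * w + (d : ℂ) * (k : ℂ) * τ) ((d : ℂ) ^ 2 * τ) := by
  have hsum (z : ℂ) : Summable (jacobiTheta₂_term · z τ) :=
    (hasSum_jacobiTheta₂_term z hτ).summable
  simp only [theta_eq_jacobiTheta₂, jacobiTheta₂, ← tsum_mul_left]
  rw [← Summable.tsum_finsetSum fun l _ => (hsum _).mul_left _]
  simp_rw [sum_range_exp_mul_jacobiTheta₂_term_add_div hd.ne']
  rw [tsum_ite_dvd_sub (by exact_mod_cast hd.ne') k]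
  refine tsum_congr fun n => ?_
  rw [jacobiTheta₂_term_add_mul]
  push_cast
  ring
end

section
/- For all z ∈ ℂ and all τ in the upper half-plane, θ(z, τ)² = θ₍₀₎(0, τ)·θ₍₀₎(z, τ) + θ₍₁₎(0, τ)·θ₍₁₎(z, τ). -/
open Complex Real

/-- Theta with characteristic `θ₍₀₎(z, τ) = ∑_{m even} exp(iπ(τ/2)m²) exp(2iπmz)`. -/
noncomputable def theta0 (z τ : ℂ) : ℂ :=
  ∑' m : ℤ, if Even m then
    Complex.exp ((Real.pi : ℂ) * Complex.I * (τ / 2) * (m : ℂ) ^ 2) *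
      Complex.exp (2 * (Real.pi : ℂ) * Complex.I * (m : ℂ) * z)
  else 0

/-- Theta with characteristic `θ₍₁₎(z, τ) = ∑_{m odd} exp(iπ(τ/2)m²) exp(2iπmz)`. -/
noncomputable def theta1 (z τ : ℂ) : ℂ :=
  ∑' m : ℤ, if Odd m then
    Complex.exp ((Real.pi : ℂ) * Complex.I * (τ / 2) * (m : ℂ) ^ 2) *
      Complex.exp (2 * (Real.pi : ℂ) * Complex.I * (m : ℂ) * z)
  else 0

lemma summable_norm_jt (w τ : ℂ) (hτ : 0 < τ.im) :
    Summable fun n : ℤ => ‖jacobiTheta₂_term n w τ‖ := by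
  refine Summable.of_nonneg_of_le (fun _ => norm_nonneg _) (fun n => ?_)
    (summable_pow_mul_jacobiTheta₂_term_bound |w.im| hτ 0)
  simpa only [pow_zero, one_mul] using norm_jacobiTheta₂_term_le hτ le_rfl le_rfl n

/-- Lemma 3.2: `θ(z,τ)² = θ₍₀₎(0,τ)θ₍₀₎(z,τ) + θ₍₁₎(0,τ)θ₍₁₎(z,τ)`. -/
theorem theta_sq_eq (z τ : ℂ) (hτ : 0 < τ.im) :
    theta z τ ^ 2 = theta0 0 τ * theta0 z τ + theta1 0 τ * theta1 z τ := by
  have hτ2 : 0 < (τ / 2).im := by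
    rw [show τ / 2 = (2⁻¹ : ℝ) • τ by rw [Complex.real_smul]; push_cast; ring,
      Complex.smul_im]
    positivity
  set f : ℤ → ℂ := fun m => jacobiTheta₂_term m z τ with hfdef
  have hf : Summable fun m => ‖f m‖ := summable_norm_jt z τ hτ
  have h1 : theta z τ = ∑' m, f m := by
    refine tsum_congr fun m => ?_
    simp only [hfdef, jacobiTheta₂_term, Complex.exp_add]
    ring
  -- the double-sum form of the left side
  have hsq : theta z τ ^ 2 = ∑' p : ℤ × ℤ, f p.1 * f p.2 := by
    rw [h1, sq, tsum_mul_tsum_of_summable_norm hf hf]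
  -- the combined summand
  set F : ℤ × ℤ → ℂ := fun p => if Even (p.1 + p.2) then
      Complex.exp ((Real.pi : ℂ) * Complex.I * (τ / 2) * ((p.1 : ℂ) ^ 2 + (p.2 : ℂ) ^ 2)) *
        Complex.exp (2 * (Real.pi : ℂ) * Complex.I * (p.2 : ℂ) * z) else 0 with hFdef
  set i : ℤ × ℤ → ℤ × ℤ := fun p => (p.1 - p.2, p.1 + p.2) with hidef
  have hinj : Function.Injective i := by
    intro p q h
    simp only [hidef, Prod.mk.injEq] at h
    exact Prod.ext (by omega) (by omega)
  have hrange : Function.support F ⊆ Set.range i := by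
    intro p hp
    simp only [Function.mem_support, hFdef] at hp
    have hev : Even (p.1 + p.2) := by
      by_contra h; simp [h] at hp
    obtain ⟨k, hk⟩ := hev
    exact ⟨(k, p.2 - k), by simp only [hidef, Prod.ext_iff]; constructor <;> omega⟩
  have hFi : ∀ p : ℤ × ℤ, F (i p) = f p.1 * f p.2 := by
    intro p
    simp only [hFdef, hidef, hfdef, jacobiTheta₂_term]
    rw [if_pos ⟨p.1, by ring⟩, ← Complex.exp_add, ← Complex.exp_add]
    congr 1
    push_cast
    ring
  have hL : theta z τ ^ 2 = ∑' p : ℤ × ℤ, F p := by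
    rw [hsq, ← hinj.tsum_eq hrange]
    exact tsum_congr fun p => (hFi p).symm
  -- right-hand side
  set g0 : ℤ → ℂ := fun m => if Even m then jacobiTheta₂_term m 0 (τ / 2) else 0 with hg0def
  set h0 : ℤ → ℂ := fun m => if Even m then jacobiTheta₂_term m z (τ / 2) else 0 with hh0def
  set g1 : ℤ → ℂ := fun m => if Odd m then jacobiTheta₂_term m 0 (τ / 2) else 0 with hg1def
  set h1' : ℤ → ℂ := fun m => if Odd m then jacobiTheta₂_term m z (τ / 2) else 0 with hh1def
  have hnorm_if : ∀ (P : ℤ → Prop) [DecidablePred P] (w : ℂ),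
      Summable fun m : ℤ => ‖if P m then jacobiTheta₂_term m w (τ / 2) else 0‖ := by
    intro P _ w
    refine Summable.of_nonneg_of_le (fun _ => norm_nonneg _) (fun n => ?_)
      (summable_norm_jt w (τ / 2) hτ2)
    by_cases h : P n <;> simp [h]
  have hg0 := hnorm_if Even 0
  have hh0 := hnorm_if Even z
  have hg1 := hnorm_if Odd 0
  have hh1 := hnorm_if Odd z
  have hth0 : ∀ w, theta0 w τ = ∑' m : ℤ, if Even m then jacobiTheta₂_term m w (τ / 2) else 0 := by
    intro w
    refine tsum_congr fun m => ?_
    by_cases h : Even m <;> simp only [h, if_true, if_false, jacobiTheta₂_term, Complex.exp_add]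
    ring_nf
  have hth1 : ∀ w, theta1 w τ = ∑' m : ℤ, if Odd m then jacobiTheta₂_term m w (τ / 2) else 0 := by
    intro w
    refine tsum_congr fun m => ?_
    by_cases h : Odd m <;> simp only [h, if_true, if_false, jacobiTheta₂_term, Complex.exp_add]
    ring_nf
  have hmul0 : theta0 0 τ * theta0 z τ = ∑' p : ℤ × ℤ, g0 p.1 * h0 p.2 := by
    rw [hth0 0, hth0 z]; exact tsum_mul_tsum_of_summable_norm hg0 hh0
  have hmul1 : theta1 0 τ * theta1 z τ = ∑' p : ℤ × ℤ, g1 p.1 * h1' p.2 := by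
    rw [hth1 0, hth1 z]; exact tsum_mul_tsum_of_summable_norm hg1 hh1
  have hS0 : Summable fun p : ℤ × ℤ => g0 p.1 * h0 p.2 := summable_mul_of_summable_norm hg0 hh0
  have hS1 : Summable fun p : ℤ × ℤ => g1 p.1 * h1' p.2 := summable_mul_of_summable_norm hg1 hh1
  have hR : theta0 0 τ * theta0 z τ + theta1 0 τ * theta1 z τ
      = ∑' p : ℤ × ℤ, (g0 p.1 * h0 p.2 + g1 p.1 * h1' p.2) := by
    rw [hmul0, hmul1, Summable.tsum_add hS0 hS1]
  have hpoint : ∀ p : ℤ × ℤ, g0 p.1 * h0 p.2 + g1 p.1 * h1' p.2 = F p := by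
    intro p
    simp only [hg0def, hh0def, hg1def, hh1def, hFdef]
    rcases Int.even_or_odd p.1 with h1e | h1o <;> rcases Int.even_or_odd p.2 with h2e | h2o
    · rw [if_pos h1e, if_pos h2e, if_neg (by simpa [Int.not_odd_iff_even] using h1e),
        if_neg (by simpa [Int.not_odd_iff_even] using h2e), if_pos (h1e.add h2e)]
      simp only [jacobiTheta₂_term, mul_zero, zero_mul, add_zero]
      rw [← Complex.exp_add, ← Complex.exp_add]
      congr 1
      ring
    · rw [if_pos h1e, if_neg (by simpa [Int.not_even_iff_odd] using h2o),
        if_neg (by simpa [Int.not_odd_iff_even] using h1e), if_pos h2o,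
        if_neg (by simp [Int.even_add, Int.not_even_iff_odd.2 h2o, h1e])]
      ring
    · rw [if_neg (by simpa [Int.not_even_iff_odd] using h1o), if_pos h2e,
        if_pos h1o, if_neg (by simpa [Int.not_odd_iff_even] using h2e),
        if_neg (by simp [Int.even_add, Int.not_even_iff_odd.2 h1o, h2e])]
      ring
    · rw [if_neg (by simpa [Int.not_even_iff_odd] using h1o),
        if_neg (by simpa [Int.not_even_iff_odd] using h2o), if_pos h1o, if_pos h2o,
        if_pos (Odd.add_odd h1o h2o)]
      simp only [jacobiTheta₂_term, mul_zero, zero_mul, zero_add]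
      rw [← Complex.exp_add, ← Complex.exp_add]
      congr 1
      ring
  rw [hL, hR]
  exact tsum_congr fun p => (hpoint p).symm
end
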